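/- Every Sturmian word satisfies property R_2, i.e., every factor has exactly two return words. -/

import Mathlib

variable {A : Type*}

/-- The factor of `u` of length `n` starting at position `j`. -/
def factorAt (u : ℕ → A) (j n : ℕ) : List A :=
  (List.range n).map (fun i => u (j + i))

/-- `j` is an occurrence of the finite word `w` in `u`. -/
def OccursAt (u : ℕ → A) (w : List A) (j : ℕ) : Prop :=
  factorAt u j w.length = w

/-- `w` is a factor of the infinite word `u`. -/
def IsFactor (u : ℕ → A) (w : List A) : Prop :=
  ∃ j, OccursAt u w j

/-- `v` is a return word of `w` in `u`: the word between two successive occurrences of `w`. -/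
def IsReturnWord (u : ℕ → A) (w v : List A) : Prop :=
  ∃ j k, j < k ∧ OccursAt u w j ∧ OccursAt u w k ∧
    (∀ l, j < l → l < k → ¬ OccursAt u w l) ∧ v = factorAt u j (k - j)

/-- The set `R(w)` of return words of `w` in `u`. -/
def returnWords (u : ℕ → A) (w : List A) : Set (List A) :=
  {v | IsReturnWord u w v}

/-- Property `R_m`: every factor of `u` has exactly `m` return words. -/
def PropertyR (u : ℕ → A) (m : ℕ) : Prop :=
  ∀ w, IsFactor u w → (returnWords u w).Finite ∧ (returnWords u w).ncard = m

/-- The set of left extensions of `w`. -/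
def leftExt (u : ℕ → A) (w : List A) : Set A := {a | IsFactor u (a :: w)}

/-- The set of right extensions of `w`. -/
def rightExt (u : ℕ → A) (w : List A) : Set A := {b | IsFactor u (w ++ [b])}

def LeftSpecial (u : ℕ → A) (w : List A) : Prop := 2 ≤ (leftExt u w).ncard

def RightSpecial (u : ℕ → A) (w : List A) : Prop := 2 ≤ (rightExt u w).ncard

/-- The set of pairs `(a, b)` such that `a w b` is a factor of `u`. -/
def extPairs (u : ℕ → A) (w : List A) : Set (A × A) :=
  {p | IsFactor u (p.1 :: (w ++ [p.2]))}

/-- The bilateral order `B(w)`. -/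
noncomputable def bilateralOrder (u : ℕ → A) (w : List A) : ℤ :=
  ((extPairs u w).ncard : ℤ) - (leftExt u w).ncard - (rightExt u w).ncard + 1

/-- `w` is a weak bispecial factor of `u`. -/
def WeakBispecial (u : ℕ → A) (w : List A) : Prop :=
  IsFactor u w ∧ bilateralOrder u w < 0

/-- The factor complexity of `u`. -/
noncomputable def Complexity (u : ℕ → A) (n : ℕ) : ℕ :=
  {w : List A | w.length = n ∧ IsFactor u w}.ncard

/-- `u` is recurrent: every factor occurs at least twice. -/
def Recurrent (u : ℕ → A) : Prop :=
  ∀ w, IsFactor u w → ∃ j k, j < k ∧ OccursAt u w j ∧ OccursAt u w k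

/-- `u` is uniformly recurrent. -/
def UniformlyRecurrent (u : ℕ → A) : Prop :=
  ∀ n : ℕ, ∃ N : ℕ, ∀ w, IsFactor u w → w.length = N →
    ∀ v, IsFactor u v → v.length = n → v <:+: w

def EventuallyPeriodic (u : ℕ → A) : Prop :=
  ∃ p, 0 < p ∧ ∃ N, ∀ n, N ≤ n → u (n + p) = u n

/-- `w` is a maximal right special factor. -/
def MaximalRightSpecial (u : ℕ → A) (w : List A) : Prop :=
  IsFactor u w ∧ RightSpecial u w ∧
    ∀ v, IsFactor u v → RightSpecial u v → w <:+ v → v = w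

/-- The return word `v` of `w` starts with the letter `b`. -/
def StartsWithLetter (w v : List A) (b : A) : Prop := (w ++ [b]) <+: (v ++ w)

/-!
A factor `w` of a Sturmian word `u` occurs infinitely often: a suffix of `u` avoiding `w` would
have complexity `C(n) ≤ n`, hence be eventually periodic by Morse–Hedlund. If `w` had only one
return word `v`, then `u` would eventually be `v v v ⋯`, so `w` has at least two.

Two distinct complete return words `v w` and `v' w` first differ at some position `d ≥ |w|`, and
their common prefix of length `d` is right special. As `C(n + 1) = C(n) + 1`, each length has a
single right special factor, with exactly two right extensions. So a complete return word has at
most one right special prefix of length `≥ |w|`: a longer one would end with the shorter one,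
giving an occurrence of `w` strictly between two successive ones. Three pairwise distinct return
words would therefore all diverge at one position `d`, with three distinct letters after the
same right special factor.
-/

theorem Set.ncard_image_add_ncard_le {α β : Type*} {f : α → β} {T D : Set α} (hT : T.Finite)
    (hD : D ⊆ T) (htwin : ∀ x ∈ D, ∃ y ∈ T \ D, f y = f x) :
    (f '' T).ncard + D.ncard ≤ T.ncard := by
  have himage : f '' T ⊆ f '' (T \ D) := by
    rintro _ ⟨x, hx, rfl⟩
    by_cases hxD : x ∈ D
    · exact htwin x hxD
    · exact ⟨x, ⟨hx, hxD⟩, rfl⟩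
  calc (f '' T).ncard + D.ncard ≤ (f '' (T \ D)).ncard + D.ncard :=
        Nat.add_le_add_right (Set.ncard_le_ncard himage (hT.sdiff.image f)) _
    _ ≤ (T \ D).ncard + D.ncard := Nat.add_le_add_right (Set.ncard_image_le hT.sdiff) _
    _ = T.ncard := Set.ncard_sdiff_add_ncard_of_subset hD hT

section Factors

variable {u : ℕ → A} {w : List A}

@[simp]
lemma factorAt_length (u : ℕ → A) (j n : ℕ) : (factorAt u j n).length = n := by
  simp [factorAt]

lemma factorAt_eq_iff {u' : ℕ → A} {j k n : ℕ} :
    factorAt u j n = factorAt u' k n ↔ ∀ i < n, u (j + i) = u' (k + i) := by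
  simp [factorAt, List.map_inj_left]

lemma factorAt_eq_of_le {i j m n : ℕ} (h : factorAt u i n = factorAt u j n) (hmn : m ≤ n) :
    factorAt u i m = factorAt u j m :=
  factorAt_eq_iff.mpr fun k hk => factorAt_eq_iff.mp h k (by omega)

lemma factorAt_succ (u : ℕ → A) (j n : ℕ) :
    factorAt u j (n + 1) = factorAt u j n ++ [u (j + n)] := by
  simp [factorAt, List.range_succ]

lemma factorAt_take (u : ℕ → A) (j n m : ℕ) :
    (factorAt u j n).take m = factorAt u j (min m n) := by
  simp [factorAt, ← List.map_take, List.take_range]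

lemma factorAt_drop (u : ℕ → A) (j n t : ℕ) :
    (factorAt u j n).drop t = factorAt u (j + t) (n - t) := by
  apply List.ext_getElem (by simp)
  intro i _ _
  simp [factorAt, add_assoc]

lemma factorAt_shift (u : ℕ → A) (s j n : ℕ) :
    factorAt (fun x => u (x + s)) j n = factorAt u (j + s) n :=
  factorAt_eq_iff.mpr fun i _ => by simp only [Nat.add_right_comm]

lemma occursAt_factorAt (u : ℕ → A) (j n : ℕ) : OccursAt u (factorAt u j n) j := by
  rw [OccursAt, factorAt_length]

lemma isFactor_factorAt (u : ℕ → A) (j n : ℕ) : IsFactor u (factorAt u j n) :=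
  ⟨j, occursAt_factorAt u j n⟩

lemma OccursAt.getElem {j i : ℕ} (h : OccursAt u w j) (hi : i < w.length) :
    u (j + i) = w[i] := by
  simpa [factorAt] using List.getElem_of_eq h (by simpa using hi)

lemma OccursAt.congr {j k : ℕ} (h : OccursAt u w j)
    (hag : ∀ i < w.length, u (j + i) = u (k + i)) : OccursAt u w k := by
  exact (factorAt_eq_iff.mpr hag).symm.trans h

lemma occursAt_shift_iff {s j : ℕ} : OccursAt (fun x => u (x + s)) w j ↔ OccursAt u w (j + s) := by
  rw [OccursAt, OccursAt, factorAt_shift]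

lemma IsFactor.drop (h : IsFactor u w) (t : ℕ) : IsFactor u (w.drop t) := by
  obtain ⟨j, hj⟩ := h
  rw [← hj, factorAt_drop]
  exact isFactor_factorAt u _ _

lemma mem_rightExt_factorAt (u : ℕ → A) (j n : ℕ) : u (j + n) ∈ rightExt u (factorAt u j n) := by
  rw [rightExt, Set.mem_ofPred_eq, ← factorAt_succ]
  exact isFactor_factorAt u j (n + 1)

lemma EventuallyPeriodic.of_shift {s : ℕ} (h : EventuallyPeriodic fun x => u (x + s)) :
    EventuallyPeriodic u := by
  obtain ⟨p, hp, N, hN⟩ := h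
  refine ⟨p, hp, N + s, fun n hn => ?_⟩
  have h' := hN (n - s) (by omega)
  simp only at h'
  rwa [show n - s + p + s = n + p by omega, show n - s + s = n by omega] at h'

end Factors

section Complexity

variable {u : ℕ → A}

def factorsOfLength (u : ℕ → A) (n : ℕ) : Set (List A) :=
  {w | w.length = n ∧ IsFactor u w}

lemma complexity_eq_ncard (u : ℕ → A) (n : ℕ) :
    Complexity u n = (factorsOfLength u n).ncard := rfl

lemma finite_factorsOfLength [Finite A] (u : ℕ → A) (n : ℕ) : (factorsOfLength u n).Finite :=
  (List.finite_length_eq A n).subset fun _ hw => hw.1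

lemma complexity_pos [Finite A] (u : ℕ → A) (n : ℕ) : 0 < Complexity u n :=
  (Set.ncard_pos (finite_factorsOfLength u n)).mpr
    ⟨factorAt u 0 n, factorAt_length u 0 n, isFactor_factorAt u 0 n⟩

lemma take_image_factorsOfLength (u : ℕ → A) (m : ℕ) :
    (·.take m) '' factorsOfLength u (m + 1) = factorsOfLength u m := by
  ext w
  constructor
  · rintro ⟨v, ⟨hl, j, hj⟩, rfl⟩
    dsimp only
    rw [← hj, hl, factorAt_take, min_eq_left (Nat.le_succ m)]
    exact ⟨factorAt_length u j m, isFactor_factorAt u j m⟩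
  · rintro ⟨rfl, j, hj⟩
    refine ⟨factorAt u j (w.length + 1), ⟨factorAt_length .., isFactor_factorAt ..⟩, ?_⟩
    dsimp only
    rw [factorAt_take, min_eq_left (Nat.le_succ _), hj]

lemma mem_factorsOfLength_of_mem_rightExt {w : List A} {b : A} (hb : b ∈ rightExt u w) :
    w ++ [b] ∈ factorsOfLength u (w.length + 1) :=
  ⟨by simp, hb⟩

lemma complexity_add_ncard_le [Finite A] {m : ℕ} {D : Set (List A)}
    (hD : D ⊆ factorsOfLength u (m + 1))
    (htwin : ∀ x ∈ D, ∃ y ∈ factorsOfLength u (m + 1) \ D, y.take m = x.take m) :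
    Complexity u m + D.ncard ≤ Complexity u (m + 1) := by
  rw [complexity_eq_ncard, complexity_eq_ncard, ← take_image_factorsOfLength]
  exact Set.ncard_image_add_ncard_le (finite_factorsOfLength u _) hD htwin

lemma complexity_lt_of_mem_rightExt [Finite A] {w : List A} {a b : A} (ha : a ∈ rightExt u w)
    (hb : b ∈ rightExt u w) (hab : a ≠ b) :
    Complexity u w.length < Complexity u (w.length + 1) := by
  have h := complexity_add_ncard_le (D := {w ++ [a]})
    (Set.singleton_subset_iff.mpr (mem_factorsOfLength_of_mem_rightExt ha))
    (by
      rintro x rfl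
      exact ⟨w ++ [b], ⟨mem_factorsOfLength_of_mem_rightExt hb, by simpa using Ne.symm hab⟩,
        by simp⟩)
  rw [Set.ncard_singleton] at h
  omega

lemma eventuallyPeriodic_of_next_letter_determined [Finite A] {m : ℕ}
    (hdet : ∀ i j, factorAt u i m = factorAt u j m → u (i + m) = u (j + m)) :
    EventuallyPeriodic u := by
  have hstep : ∀ i j, factorAt u i m = factorAt u j m →
      factorAt u (i + 1) m = factorAt u (j + 1) m := fun i j h => by
    have h' : factorAt u i (m + 1) = factorAt u j (m + 1) := by
      rw [factorAt_succ, factorAt_succ, h, hdet i j h]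
    simpa [factorAt_drop] using congrArg (·.drop 1) h'
  have hwindow : ∀ i j, factorAt u i m = factorAt u j m →
      ∀ t, factorAt u (i + t) m = factorAt u (j + t) m := by
    intro i j h t
    induction t with
    | zero => exact h
    | succ t ih => exact hstep _ _ ih
  obtain ⟨i, -, j, -, hij, hsame⟩ := Set.infinite_univ.exists_ne_map_eq_of_mapsTo
    (f := fun i => factorAt u i m) (fun i _ => factorAt_length u i m) (List.finite_length_eq A m)
  wlog hlt : i < j generalizing i j
  · exact this j i hij.symm hsame.symm (by omega)
  refine ⟨j - i, by omega, i + m, fun n hn => ?_⟩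
  have h := hdet _ _ (hwindow i j hsame (n - i - m))
  convert h.symm using 2 <;> omega

theorem eventuallyPeriodic_of_complexity_le [Finite A] {n : ℕ} (h : Complexity u n ≤ n) :
    EventuallyPeriodic u := by
  obtain ⟨m, hm⟩ : ∃ m, Complexity u (m + 1) ≤ Complexity u m := by
    by_contra! hgrow
    have hlow : ∀ k, k + 1 ≤ Complexity u k := fun k => by
      induction k with
      | zero => exact complexity_pos u 0
      | succ k ih => have := hgrow k; omega
    have := hlow n
    omega
  refine eventuallyPeriodic_of_next_letter_determined (m := m) fun i j hij => ?_
  by_contra hne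
  have h' := complexity_lt_of_mem_rightExt (mem_rightExt_factorAt u i m)
    (hij ▸ mem_rightExt_factorAt u j m) hne
  rw [factorAt_length] at h'
  omega

theorem exists_lt_occursAt [Finite A] (haper : ¬ EventuallyPeriodic u) {w : List A}
    (hw : IsFactor u w) (hC : Complexity u w.length ≤ w.length + 1) (M : ℕ) :
    ∃ j, M < j ∧ OccursAt u w j := by
  by_contra! hmiss
  refine haper (EventuallyPeriodic.of_shift (s := M + 1)
    (eventuallyPeriodic_of_complexity_le (n := w.length) ?_))
  have hsub : factorsOfLength (fun x => u (x + (M + 1))) w.length ⊆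
      factorsOfLength u w.length \ {w} := by
    rintro x ⟨hx, j, hj⟩
    rw [occursAt_shift_iff] at hj
    exact ⟨⟨hx, _, hj⟩, fun hxw => hmiss _ (by omega) (hxw ▸ hj)⟩
  calc Complexity (fun x => u (x + (M + 1))) w.length
      ≤ (factorsOfLength u w.length \ {w}).ncard :=
        Set.ncard_le_ncard hsub (finite_factorsOfLength u _).sdiff
    _ = Complexity u w.length - 1 := Set.ncard_sdiff_singleton_of_mem ⟨rfl, hw⟩
    _ ≤ w.length := by omega

end Complexity

section RightSpecial

variable {u : ℕ → A} {p q : List A}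

lemma rightSpecial_of_factorAt_eq [Finite A] {i j d : ℕ} (h : factorAt u i d = factorAt u j d)
    (hne : u (i + d) ≠ u (j + d)) : RightSpecial u (factorAt u i d) :=
  (Set.one_lt_ncard (Set.toFinite _)).mpr
    ⟨_, mem_rightExt_factorAt u i d, _, h ▸ mem_rightExt_factorAt u j d, hne⟩

lemma rightExt_subset_rightExt_drop {t : ℕ} (ht : t ≤ p.length) :
    rightExt u p ⊆ rightExt u (p.drop t) := fun b hb => by
  have h := IsFactor.drop hb t
  rwa [List.drop_append_of_le_length ht] at h

lemma RightSpecial.drop [Finite A] (h : RightSpecial u p) {t : ℕ} (ht : t ≤ p.length) :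
    RightSpecial u (p.drop t) :=
  h.trans (Set.ncard_le_ncard (rightExt_subset_rightExt_drop ht) (Set.toFinite _))

lemma RightSpecial.eq_of_length_eq [Finite A]
    (hC : Complexity u (p.length + 1) ≤ Complexity u p.length + 1)
    (hp : RightSpecial u p) (hq : RightSpecial u q) (hl : p.length = q.length) : p = q := by
  by_contra hne
  obtain ⟨a, ha, b, hb, hab⟩ := (Set.one_lt_ncard (Set.toFinite _)).mp hp
  obtain ⟨c, hc, d, hd, hcd⟩ := (Set.one_lt_ncard (Set.toFinite _)).mp hq
  have hpq : ∀ x y, p ++ [x] ≠ q ++ [y] := fun x y h => hne (List.append_inj h hl).1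
  have hmem : ∀ {r : List A} {x : A}, r.length = p.length → x ∈ rightExt u r →
      r ++ [x] ∈ factorsOfLength u (p.length + 1) := fun hr hx => hr ▸ ⟨by simp, hx⟩
  have h := complexity_add_ncard_le (D := {p ++ [a], q ++ [c]})
    (Set.pair_subset (hmem rfl ha) (hmem hl.symm hc)) (by
      rintro x (rfl | rfl)
      · exact ⟨p ++ [b], ⟨hmem rfl hb, by simp [hab.symm, hpq]⟩, by simp⟩
      · exact ⟨q ++ [d], ⟨hmem hl.symm hd, by simp [hcd.symm, (hpq _ _).symm]⟩,
          by simp [hl]⟩)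
  rw [Set.ncard_pair (hpq a c)] at h
  omega

lemma ncard_rightExt_le_two [Finite A]
    (hC : Complexity u (p.length + 1) ≤ Complexity u p.length + 1) :
    (rightExt u p).ncard ≤ 2 := by
  by_contra! h
  obtain ⟨a, b, c, ha, hb, hc, hab, hac, hbc⟩ := (Set.two_lt_ncard_iff (Set.toFinite _)).mp h
  have h := complexity_add_ncard_le (D := {p ++ [a], p ++ [b]})
    (Set.pair_subset (mem_factorsOfLength_of_mem_rightExt ha)
      (mem_factorsOfLength_of_mem_rightExt hb)) (by
      rintro x (rfl | rfl)
      all_goals exact ⟨p ++ [c],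
        ⟨mem_factorsOfLength_of_mem_rightExt hc, by simp [hac.symm, hbc.symm]⟩, by simp⟩)
  rw [Set.ncard_pair (by simpa using hab)] at h
  omega

end RightSpecial

section ReturnWords

variable {u : ℕ → A} {w : List A}

def SuccessiveOccurrences (u : ℕ → A) (w : List A) (j k : ℕ) : Prop :=
  j < k ∧ OccursAt u w j ∧ OccursAt u w k ∧ ∀ l, j < l → l < k → ¬ OccursAt u w l

lemma mem_returnWords_iff {v : List A} :
    v ∈ returnWords u w ↔ ∃ j k, SuccessiveOccurrences u w j k ∧ v = factorAt u j (k - j) := by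
  simp only [returnWords, IsReturnWord, SuccessiveOccurrences, Set.mem_ofPred_eq, and_assoc]

lemma exists_successiveOccurrences {j : ℕ} (hj : OccursAt u w j)
    (hk : ∃ k, j < k ∧ OccursAt u w k) : ∃ k, SuccessiveOccurrences u w j k := by
  classical
  exact ⟨Nat.find hk, (Nat.find_spec hk).1, hj, (Nat.find_spec hk).2,
    fun l hjl hlk hl => Nat.find_min hk hlk ⟨hjl, hl⟩⟩

theorem eventuallyPeriodic_of_returnWords_subsingleton
    (hrec : ∀ M, ∃ j, M < j ∧ OccursAt u w j) (h : (returnWords u w).Subsingleton) :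
    EventuallyPeriodic u := by
  have hnext : ∀ j, OccursAt u w j → ∃ k, SuccessiveOccurrences u w j k :=
    fun j hj => exists_successiveOccurrences hj (hrec j)
  obtain ⟨j₀, -, hj₀⟩ := hrec 0
  obtain ⟨k₀, hk₀⟩ := hnext j₀ hj₀
  set p := k₀ - j₀
  have hstep : ∀ j, OccursAt u w j → OccursAt u w (j + p) ∧ factorAt u j p = factorAt u j₀ p := by
    intro j hj
    obtain ⟨k, hk⟩ := hnext j hj
    have heq : factorAt u j (k - j) = factorAt u j₀ p :=
      h (mem_returnWords_iff.mpr ⟨j, k, hk, rfl⟩) (mem_returnWords_iff.mpr ⟨j₀, k₀, hk₀, rfl⟩)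
    have hlen : k - j = p := by simpa using congrArg List.length heq
    rw [hlen] at heq
    refine ⟨?_, heq⟩
    rw [← hlen, Nat.add_sub_cancel' hk.1.le]
    exact hk.2.2.1
  have hocc : ∀ t, OccursAt u w (j₀ + p * t) := fun t => by
    induction t with
    | zero => simpa using hj₀
    | succ t ih => simpa [mul_add, ← add_assoc] using (hstep _ ih).1
  have hpos : 0 < p := by have := hk₀.1; omega
  refine ⟨p, hpos, j₀, fun n hn => ?_⟩
  obtain ⟨t, r, hr, rfl⟩ : ∃ t r, r < p ∧ n = j₀ + p * t + r :=
    ⟨(n - j₀) / p, (n - j₀) % p, Nat.mod_lt _ hpos, by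
      have := Nat.div_add_mod (n - j₀) p; omega⟩
  have h' := factorAt_eq_iff.mp
    ((hstep _ (hocc (t + 1))).2.trans (hstep _ (hocc t)).2.symm) r hr
  convert h' using 2
  ring

lemma SuccessiveOccurrences.not_lt_of_factorAt_eq {j₁ k₁ j₂ k₂ : ℕ}
    (h₁ : SuccessiveOccurrences u w j₁ k₁) (h₂ : SuccessiveOccurrences u w j₂ k₂)
    (hag : factorAt u j₁ (k₁ - j₁ + w.length) = factorAt u j₂ (k₁ - j₁ + w.length)) :
    ¬ k₁ - j₁ < k₂ - j₂ := fun hlt => by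
  have := h₁.1
  have := h₂.1
  refine h₂.2.2.2 (j₂ + (k₁ - j₁)) (by omega) (by omega) (h₁.2.2.1.congr fun i hi => ?_)
  have h := factorAt_eq_iff.mp hag (k₁ - j₁ + i) (by omega)
  convert h using 2 <;> omega

lemma exists_factorAt_eq_of_factorAt_ne {i j N : ℕ} (h : factorAt u i N ≠ factorAt u j N) :
    ∃ d < N, factorAt u i d = factorAt u j d ∧ u (i + d) ≠ u (j + d) := by
  induction N with
  | zero => simp [factorAt] at h
  | succ N ih =>
    by_cases heq : factorAt u i N = factorAt u j N
    · refine ⟨N, N.lt_succ_self, heq, fun hN => h ?_⟩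
      rw [factorAt_succ, factorAt_succ, heq, hN]
    · obtain ⟨d, hd, hdiv⟩ := ih heq
      exact ⟨d, by omega, hdiv⟩

lemma SuccessiveOccurrences.exists_diverge {j₁ k₁ j₂ k₂ : ℕ}
    (h₁ : SuccessiveOccurrences u w j₁ k₁) (h₂ : SuccessiveOccurrences u w j₂ k₂)
    (hne : factorAt u j₁ (k₁ - j₁) ≠ factorAt u j₂ (k₂ - j₂)) :
    ∃ d, w.length ≤ d ∧ d < k₁ - j₁ + w.length ∧ d < k₂ - j₂ + w.length ∧
      factorAt u j₁ d = factorAt u j₂ d ∧ u (j₁ + d) ≠ u (j₂ + d) := by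
  have hN : factorAt u j₁ (min (k₁ - j₁) (k₂ - j₂) + w.length) ≠
      factorAt u j₂ (min (k₁ - j₁) (k₂ - j₂) + w.length) := by
    intro hag
    rcases lt_trichotomy (k₁ - j₁) (k₂ - j₂) with hlt | heq | hgt
    · exact h₁.not_lt_of_factorAt_eq h₂ (factorAt_eq_of_le hag (by omega)) hlt
    · exact hne (heq ▸ factorAt_eq_of_le hag (by omega))
    · exact h₂.not_lt_of_factorAt_eq h₁ (factorAt_eq_of_le hag.symm (by omega)) hgt
  obtain ⟨d, hd, hpre, hdiv⟩ := exists_factorAt_eq_of_factorAt_ne hN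
  refine ⟨d, ?_, by omega, by omega, hpre, hdiv⟩
  by_contra! hdw
  exact hdiv ((h₁.2.1.getElem hdw).trans (h₂.2.1.getElem hdw).symm)

lemma SuccessiveOccurrences.eq_of_rightSpecial [Finite A] {j k d e : ℕ}
    (h : SuccessiveOccurrences u w j k) (hC : ∀ n, Complexity u (n + 1) ≤ Complexity u n + 1)
    (hd : w.length ≤ d) (he : w.length ≤ e) (hdk : d < k - j + w.length)
    (hek : e < k - j + w.length) (hds : RightSpecial u (factorAt u j d))
    (hes : RightSpecial u (factorAt u j e)) : d = e := by
  wlog hde : d < e generalizing d e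
  · rcases (not_lt.mp hde).lt_or_eq with hlt | heq
    · exact (this he hd hek hdk hes hds hlt).symm
    · exact heq.symm
  have hsuffix : (factorAt u j e).drop (e - d) = factorAt u (j + (e - d)) d := by
    rw [factorAt_drop, Nat.sub_sub_self hde.le]
  have hspec : RightSpecial u (factorAt u (j + (e - d)) d) :=
    hsuffix ▸ hes.drop (by simp)
  have heq : factorAt u j d = factorAt u (j + (e - d)) d :=
    hds.eq_of_length_eq (by simpa using hC d) hspec (by simp)
  exact (h.2.2.2 _ (by omega) (by omega)
    (h.2.1.congr fun i hi => factorAt_eq_iff.mp heq i (by omega))).elim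

theorem returnWords_subset_pair [Finite A] (hC : ∀ n, Complexity u (n + 1) ≤ Complexity u n + 1)
    {v₁ v₂ : List A} (hv₁ : v₁ ∈ returnWords u w) (hv₂ : v₂ ∈ returnWords u w) (hne : v₁ ≠ v₂) :
    returnWords u w ⊆ {v₁, v₂} := by
  intro v₃ hv₃
  by_contra hv₃'
  simp only [Set.mem_insert_iff, Set.mem_singleton_iff, not_or] at hv₃'
  obtain ⟨j₁, k₁, h₁, rfl⟩ := mem_returnWords_iff.mp hv₁
  obtain ⟨j₂, k₂, h₂, rfl⟩ := mem_returnWords_iff.mp hv₂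
  obtain ⟨j₃, k₃, h₃, rfl⟩ := mem_returnWords_iff.mp hv₃
  obtain ⟨d, hd, hd₁, hd₂, hpre₁₂, hdiv₁₂⟩ := h₁.exists_diverge h₂ hne
  obtain ⟨d', hd', hd'₁, -, hpre₁₃, hdiv₁₃⟩ := h₁.exists_diverge h₃ (Ne.symm hv₃'.1)
  obtain ⟨d'', hd'', hd''₂, -, hpre₂₃, hdiv₂₃⟩ := h₂.exists_diverge h₃ (Ne.symm hv₃'.2)
  obtain rfl : d = d' := h₁.eq_of_rightSpecial hC hd hd' hd₁ hd'₁
    (rightSpecial_of_factorAt_eq hpre₁₂ hdiv₁₂) (rightSpecial_of_factorAt_eq hpre₁₃ hdiv₁₃)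
  obtain rfl : d = d'' := h₂.eq_of_rightSpecial hC hd hd'' hd₂ hd''₂
    (rightSpecial_of_factorAt_eq hpre₁₂.symm hdiv₁₂.symm)
    (rightSpecial_of_factorAt_eq hpre₂₃ hdiv₂₃)
  have hthree : 2 < (rightExt u (factorAt u j₁ d)).ncard :=
    (Set.two_lt_ncard_iff (Set.toFinite _)).mpr ⟨_, _, _, mem_rightExt_factorAt u j₁ d,
      hpre₁₂ ▸ mem_rightExt_factorAt u j₂ d, hpre₁₃ ▸ mem_rightExt_factorAt u j₃ d,
      hdiv₁₂, hdiv₁₃, hdiv₂₃⟩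
  have htwo := ncard_rightExt_le_two (u := u) (p := factorAt u j₁ d) (by simpa using hC d)
  omega

end ReturnWords

theorem sturmian_propertyR_two_general [Fintype A] (u : ℕ → A)
    (haper : ¬ EventuallyPeriodic u) (hcompl : ∀ n, Complexity u n = n + 1) :
    PropertyR u 2 := by
  intro w hw
  have hrec := exists_lt_occursAt haper hw (hcompl w.length).le
  obtain ⟨v₁, hv₁, v₂, hv₂, hne⟩ : (returnWords u w).Nontrivial := Set.not_subsingleton_iff.mp
    fun h => haper (eventuallyPeriodic_of_returnWords_subsingleton hrec h)
  have hR : returnWords u w = {v₁, v₂} :=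
    (returnWords_subset_pair (fun n => by rw [hcompl, hcompl]) hv₁ hv₂ hne).antisymm
      (Set.pair_subset hv₁ hv₂)
  rw [hR]
  exact ⟨Set.toFinite _, Set.ncard_pair hne⟩

/-- Every Sturmian word (an aperiodic word over a two-letter alphabet with
complexity `C(n) = n + 1` for all `n`) satisfies property `R_2`. -/
theorem sturmian_propertyR_two [Fintype A] (hcard : Fintype.card A = 2) (u : ℕ → A)
    (haper : ¬ EventuallyPeriodic u) (hcompl : ∀ n, Complexity u n = n + 1) :
    PropertyR u 2 :=
  sturmian_propertyR_two_general u haper hcompl
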